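/- arXiv:2006.08798 — 3 statements merged into one kernel-verified Lean document; each statement's English description precedes it below -/
import Mathlib

section
/- Let N be a positive integer and W : Fin N → Fin N → ℝ. Suppose s : ℝ → Fin N → ℝ is a trajectory such that for every time t ≥ 0 and every index j, the function t ↦ s t j has derivative at t equal to (∑_{i} W i j * s t i) − (s t j) * (∑_{i} W j i). Then the total firing rate t ↦ ∑_{j} s t j is constant on [0, ∞); equivalently, for all t₁, t₂ ≥ 0, ∑_{j} s t₁ j = ∑_{j} s t₂ j. -/
/-- Proposition 1 of the paper: along any trajectory of the DEEP free-phase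
dynamics `ṡ_j = ∑ i, W i j * s i - s j * ∑ i, W j i` (no external stimulus),
the total firing rate `∑ j, s t j` is constant on `[0, ∞)`. -/
theorem deep_total_firing_rate_constant (N : ℕ) (hN : 0 < N)
    (W : Fin N → Fin N → ℝ) (s : ℝ → Fin N → ℝ)
    (hdyn : ∀ t : ℝ, 0 ≤ t → ∀ j : Fin N,
      HasDerivAt (fun τ => s τ j)
        ((∑ i : Fin N, W i j * s t i) - s t j * (∑ i : Fin N, W j i)) t) :
    ∀ t₁ t₂ : ℝ, 0 ≤ t₁ → 0 ≤ t₂ →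
      ∑ j : Fin N, s t₁ j = ∑ j : Fin N, s t₂ j := by
  have hF : ∀ t : ℝ, 0 ≤ t → HasDerivAt (fun τ => ∑ j : Fin N, s τ j) 0 t := by
    intro t ht
    have h := HasDerivAt.fun_sum (u := Finset.univ) (fun j _ => hdyn t ht j)
    have hz : (∑ j : Fin N, ((∑ i : Fin N, W i j * s t i) - s t j * (∑ i : Fin N, W j i))) = 0 := by
      rw [Finset.sum_sub_distrib, Finset.sum_comm]
      simp [Finset.mul_sum, mul_comm]
    rwa [hz] at h
  have key : ∀ a b : ℝ, 0 ≤ a → a ≤ b →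
      ∑ j : Fin N, s b j = ∑ j : Fin N, s a j := by
    intro a b ha hab
    refine constant_of_has_deriv_right_zero (f := fun τ => ∑ j : Fin N, s τ j) (a := a) (b := b)
      (fun x hx => ((hF x (ha.trans hx.1)).continuousAt.continuousWithinAt)) ?_ b ?_
    · intro x hx
      exact (hF x (ha.trans hx.1)).hasDerivWithinAt
    · exact Set.right_mem_Icc.2 hab
  intro t₁ t₂ h1 h2
  rcases le_total t₁ t₂ with h | h
  · exact (key t₁ t₂ h1 h).symm
  · exact key t₂ t₁ h2 h
end

section
/- Let N and P be integers with 0 ≤ P < N (P input neurons among N neurons) and let W : Fin N → Fin N → ℝ. Suppose that for every j with P+1 ≤ j ≤ N: (i) ∑_{i=1}^{N} W j i > 0, and (ii) ∑_{i=P+1}^{N} |W i j| < |∑_{i=1}^{N} W j i|. Define the reduced Jacobian matrix J indexed by the non-input neurons j, k ∈ {P+1, …, N} by J j k = W k j for k ≠ j and J j j = W j j − ∑_{i=1}^{N} W j i. Then for every j ∈ {P+1, …, N}, the diagonal entry is negative, J j j < 0, and the row is strictly diagonally dominant: ∑_{k ∈ {P+1,…,N}, k ≠ j} |J j k| < |J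 j j|. -/
/-- Core inequality chain in the proof of Proposition 2 of the paper: under the
hypotheses `∑ i, W j i > 0` and `∑_{i ≥ P} |W i j| < |∑ i, W j i|` for every
non-input neuron `j` (indices `j` with `P ≤ j`, corresponding to the paper's
`j ∈ {P+1, …, N}`), the reduced Jacobian `J j k = W k j` (for `k ≠ j`),
`J j j = W j j - ∑ i, W j i`, has negative diagonal entries and is strictly
row-diagonally dominant over the non-input indices. -/
theorem deep_jacobian_diag_dominant (N P : ℕ) (hP : P < N)
    (W : Fin N → Fin N → ℝ)
    (h1 : ∀ j : Fin N, P ≤ (j : ℕ) → 0 < ∑ i : Fin N, W j i)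
    (h2 : ∀ j : Fin N, P ≤ (j : ℕ) →
      ∑ i ∈ Finset.univ.filter (fun i : Fin N => P ≤ (i : ℕ)), |W i j|
        < |∑ i : Fin N, W j i|)
    (J : Fin N → Fin N → ℝ)
    (hJ : ∀ j k : Fin N,
      J j k = if k = j then W j j - ∑ i : Fin N, W j i else W k j) :
    ∀ j : Fin N, P ≤ (j : ℕ) →
      J j j < 0 ∧
      ∑ k ∈ Finset.univ.filter (fun k : Fin N => P ≤ (k : ℕ) ∧ k ≠ j), |J j k|
        < |J j j| := by
  intro j hj
  set S := ∑ i : Fin N, W j i with hS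
  have hSpos := h1 j hj
  have h2j := h2 j hj
  rw [abs_of_pos hSpos] at h2j
  have hmem : j ∈ Finset.univ.filter (fun i : Fin N => P ≤ (i : ℕ)) := by
    simp [hj]
  have hWjj_le : |W j j| ≤ ∑ i ∈ Finset.univ.filter (fun i : Fin N => P ≤ (i : ℕ)), |W i j| :=
    Finset.single_le_sum (f := fun i => |W i j|) (fun i _ => abs_nonneg _) hmem
  have hWjj_lt : W j j < S := lt_of_le_of_lt (le_trans (le_abs_self _) hWjj_le) h2j
  have hJjj : J j j = W j j - S := by rw [hJ]; simp [hS]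
  have hdiag : J j j < 0 := by rw [hJjj]; linarith
  refine ⟨hdiag, ?_⟩
  have habsJ : |J j j| = S - W j j := by
    rw [hJjj, abs_of_neg (by linarith : W j j - S < 0)]; ring
  have hsplit : ∑ i ∈ Finset.univ.filter (fun i : Fin N => P ≤ (i : ℕ)), |W i j|
      = |W j j| + ∑ k ∈ Finset.univ.filter (fun k : Fin N => P ≤ (k : ℕ) ∧ k ≠ j), |W k j| := by
    rw [← Finset.sum_filter_add_sum_filter_not
      (Finset.univ.filter (fun i : Fin N => P ≤ (i : ℕ))) (fun k => k = j)]
    congr 1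
    · rw [Finset.filter_filter]
      rw [show (Finset.univ.filter fun a : Fin N => P ≤ (a : ℕ) ∧ a = j) = {j} by
        ext x; simp; rintro rfl; exact hj]
      simp
    · congr 1
      ext x
      simp [and_comm, and_assoc]
  have hsum_eq : ∑ k ∈ Finset.univ.filter (fun k : Fin N => P ≤ (k : ℕ) ∧ k ≠ j), |J j k|
      = ∑ k ∈ Finset.univ.filter (fun k : Fin N => P ≤ (k : ℕ) ∧ k ≠ j), |W k j| := by
    refine Finset.sum_congr rfl fun k hk => ?_
    simp only [Finset.mem_filter] at hk
    rw [hJ, if_neg hk.2.2]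
  rw [hsum_eq, habsJ]
  have := le_trans (le_abs_self (W j j)) (le_of_eq rfl)
  have h3 : |W j j| + ∑ k ∈ Finset.univ.filter (fun k : Fin N => P ≤ (k : ℕ) ∧ k ≠ j), |W k j| < S := by
    rw [← hsplit]; exact h2j
  have h4 : W j j ≤ |W j j| := le_abs_self _
  linarith
end

section
/- Let N and P be integers with 0 ≤ P < N and let W : Fin N → Fin N → ℝ. Suppose that for every j with P+1 ≤ j ≤ N: (i) ∑_{i=1}^{N} W j i > 0, and (ii) ∑_{i=P+1}^{N} |W i j| < |∑_{i=1}^{N} W j i|. Define the reduced Jacobian matrix J indexed by j, k ∈ {P+1, …, N} by J j k = W k j for k ≠ j and J j j = W j j − ∑_{i=1}^{N} W j i. Then every complex eigenvalue μ of J has strictly negative real part: Re μ < 0. -/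
/-- Linearized-stability content of Proposition 2 of the paper: under the
hypotheses `∑ i, W j i > 0` and `∑_{i ≥ P} |W i j| < |∑ i, W j i|` for every
non-input neuron `j` (indices with `P ≤ j`, the paper's `j ∈ {P+1, …, N}`),
every complex eigenvalue of the reduced Jacobian
`J j k = W k j` (for `k ≠ j`), `J j j = W j j - ∑ i, W j i`, indexed by the
non-input neurons, has strictly negative real part. -/
theorem deep_jacobian_eigenvalues_re_neg (N P : ℕ) (hP : P < N)
    (W : Fin N → Fin N → ℝ)
    (h1 : ∀ j : Fin N, P ≤ (j : ℕ) → 0 < ∑ i : Fin N, W j i)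
    (h2 : ∀ j : Fin N, P ≤ (j : ℕ) →
      ∑ i ∈ Finset.univ.filter (fun i : Fin N => P ≤ (i : ℕ)), |W i j|
        < |∑ i : Fin N, W j i|)
    (J : {j : Fin N // P ≤ (j : ℕ)} → {j : Fin N // P ≤ (j : ℕ)} → ℝ)
    (hJ : ∀ j k : {j : Fin N // P ≤ (j : ℕ)},
      J j k = if k = j then W j.1 j.1 - ∑ i : Fin N, W j.1 i else W k.1 j.1) :
    ∀ μ : ℂ,
      (∃ v : {j : Fin N // P ≤ (j : ℕ)} → ℂ, v ≠ 0 ∧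
        ∀ j, ∑ k, (J j k : ℂ) * v k = μ * v j) →
      μ.re < 0 := by
  rintro μ ⟨v, hv0, hev⟩
  -- choose an index maximizing |v j|
  have hne : (Finset.univ : Finset {j : Fin N // P ≤ (j : ℕ)}).Nonempty :=
    ⟨⟨⟨P, hP⟩, le_refl P⟩, Finset.mem_univ _⟩
  obtain ⟨j, -, hjmax⟩ := Finset.exists_max_image Finset.univ
    (fun k => ‖v k‖) hne
  have hjpos : 0 < ‖v j‖ := by
    obtain ⟨j0, hj0⟩ : ∃ j0, v j0 ≠ 0 := by
      by_contra h
      push_neg at h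
      exact hv0 (funext h)
    have := hjmax j0 (Finset.mem_univ _)
    have h0 : 0 < ‖v j0‖ := by
      simpa [norm_pos_iff] using hj0
    linarith
  -- Gershgorin step
  have hsplit : (μ - (J j j : ℂ)) * v j
      = ∑ k ∈ Finset.univ.erase j, (J j k : ℂ) * v k := by
    have h := hev j
    rw [← Finset.add_sum_erase _ _ (Finset.mem_univ j)] at h
    linear_combination -h
  set R : ℝ := ∑ k ∈ Finset.univ.erase j, |J j k| with hR
  have habs : ‖μ - (J j j : ℂ)‖ * ‖v j‖
      ≤ R * ‖v j‖ := by
    calc ‖μ - (J j j : ℂ)‖ * ‖v j‖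
        = ‖(μ - (J j j : ℂ)) * v j‖ := (norm_mul _ _).symm
      _ = ‖∑ k ∈ Finset.univ.erase j, (J j k : ℂ) * v k‖ := by
          rw [hsplit]
      _ ≤ ∑ k ∈ Finset.univ.erase j, ‖(J j k : ℂ) * v k‖ :=
          norm_sum_le _ _
      _ ≤ ∑ k ∈ Finset.univ.erase j, |J j k| * ‖v j‖ := by
          refine Finset.sum_le_sum fun k _ => ?_
          rw [norm_mul, Complex.norm_real, Real.norm_eq_abs]
          exact mul_le_mul_of_nonneg_left (hjmax k (Finset.mem_univ _))
            (abs_nonneg _)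
      _ = R * ‖v j‖ := by rw [hR, Finset.sum_mul]
  have hball : ‖μ - (J j j : ℂ)‖ ≤ R :=
    le_of_mul_le_mul_right habs hjpos
  have hre : μ.re - J j j ≤ R := by
    have h1' : μ.re - J j j ≤ |(μ - (J j j : ℂ)).re| := by
      simp only [Complex.sub_re, Complex.ofReal_re]
      exact le_abs_self _
    have h2' := Complex.abs_re_le_norm (μ - (J j j : ℂ))
    linarith
  -- numerical estimate
  set S : ℝ := ∑ i : Fin N, W j.1 i with hS
  have hSpos : 0 < S := h1 j.1 j.2
  set T : ℝ := ∑ i ∈ Finset.univ.filter (fun i : Fin N => P ≤ (i : ℕ)), |W i j.1|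
    with hT
  have hTS : T < S := by
    have := h2 j.1 j.2
    rwa [abs_of_pos hSpos] at this
  have hJjj : J j j = W j.1 j.1 - S := by rw [hJ]; simp [hS]
  have hRT : R = T - |W j.1 j.1| := by
    have hfull : ∑ k : {j : Fin N // P ≤ (j : ℕ)}, |W k.1 j.1| = T := by
      rw [hT]
      exact (Finset.sum_subtype _ (fun x => by simp) (fun i => |W i j.1|)).symm
    have herase : R = (∑ k : {j : Fin N // P ≤ (j : ℕ)}, |W k.1 j.1|) - |W j.1 j.1| := by
      rw [hR]
      have : ∀ k ∈ Finset.univ.erase j, |J j k| = |W k.1 j.1| := by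
        intro k hk
        rw [hJ]
        simp [Finset.mem_erase.mp hk |>.1]
      rw [Finset.sum_congr rfl this, Finset.sum_erase_eq_sub (Finset.mem_univ j)]
    rw [herase, hfull]
  have hWle : W j.1 j.1 ≤ |W j.1 j.1| := le_abs_self _
  linarith [hre, hJjj ▸ hre]
end
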